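/- arXiv:2103.05588 — 7 statements merged into one kernel-verified Lean document; each statement's English description precedes it below -/
import Mathlib

section
/- Every acyclic orientation of a finite undirected graph H has a t-kernel with t ≤ max(1, imn(H)), where imn(H) is the induced matching number of H. -/
/-- `M` is an induced matching of `H`: a set of edges of `H` that are pairwise disjoint,
such that any edge of `H` whose endpoints are both covered by `M` belongs to `M`. -/
def IsInducedMatching {V : Type} (H : SimpleGraph V) (M : Finset (Sym2 V)) : Prop :=
  (∀ e ∈ M, e ∈ H.edgeSet) ∧
  (∀ e ∈ M, ∀ f ∈ M, e ≠ f → ∀ v : V, v ∈ e → v ∉ f) ∧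
  (∀ u v : V, H.Adj u v → (∃ e ∈ M, u ∈ e) → (∃ e ∈ M, v ∈ e) → s(u, v) ∈ M)

/-- The induced matching number of `H`. -/
noncomputable def imn {V : Type} (H : SimpleGraph V) : ℕ :=
  sSup {m | ∃ M : Finset (Sym2 V), IsInducedMatching H M ∧ M.card = m}

/-- Every acyclic orientation `A` of a finite graph `H` has a `t`-kernel with
`t ≤ max 1 (imn H)`: a nonempty set `K` of sources of the orientation, of size at most
`max 1 (imn H)`, such that every non-source vertex is reachable from `K`. -/
theorem stmt1 {V : Type} [Fintype V] [DecidableEq V] [Nonempty V]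
    (H : SimpleGraph V) (A : V → V → Prop)
    (horient : ∀ u v : V, A u v → H.Adj u v)
    (hcover : ∀ u v : V, H.Adj u v ↔ (A u v ∨ A v u))
    (hacyc : ∀ v : V, ¬ Relation.TransGen A v v) :
    ∃ K : Finset V,
      (∀ x ∈ K, ∀ u : V, ¬ A u x) ∧
      1 ≤ K.card ∧ K.card ≤ max 1 (imn H) ∧
      ∀ v : V, (∃ u : V, A u v) → ∃ x ∈ K, Relation.ReflTransGen A x v := by
  classical
  by_cases hns : ∃ v : V, ∃ u : V, A u v
  · -- there is at least one non-source
    -- A is well-founded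
    have hirr : IsIrrefl V (Relation.TransGen A) := ⟨hacyc⟩
    have hwfT : WellFounded (Relation.TransGen A) :=
      Finite.wellFounded_of_trans_of_irrefl _
    have hwf : WellFounded A :=
      Subrelation.wf (fun h => Relation.TransGen.single h) hwfT
    -- every vertex is reachable from a source
    have hreach : ∀ v : V, ∃ x, (∀ u, ¬ A u x) ∧ Relation.ReflTransGen A x v := by
      intro v
      induction v using hwf.induction with
      | _ w ih =>
        by_cases hw : ∃ u, A u w
        · obtain ⟨u, hu⟩ := hw
          obtain ⟨x, hx1, hx2⟩ := ih u hu
          exact ⟨x, hx1, hx2.tail hu⟩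
        · exact ⟨w, fun u hu => hw ⟨u, hu⟩, Relation.ReflTransGen.refl⟩
    -- the family of covering source sets
    have hex : ∃ n : ℕ, ∃ K : Finset V,
        ((∀ x ∈ K, ∀ u, ¬ A u x) ∧
          ∀ v : V, (∃ u, A u v) → ∃ x ∈ K, Relation.ReflTransGen A x v) ∧ K.card = n := by
      refine ⟨_, Finset.univ.filter (fun x => ∀ u, ¬ A u x), ⟨?_, ?_⟩, rfl⟩
      · intro x hx
        exact (Finset.mem_filter.mp hx).2
      · intro v _
        obtain ⟨x, hx1, hx2⟩ := hreach v
        exact ⟨x, Finset.mem_filter.mpr ⟨Finset.mem_univ x, hx1⟩, hx2⟩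
    obtain ⟨K, ⟨hKsrc, hKcov⟩, hKcard⟩ := Nat.find_spec hex
    have hmin : ∀ K' : Finset V,
        ((∀ x ∈ K', ∀ u, ¬ A u x) ∧
          ∀ v : V, (∃ u, A u v) → ∃ x ∈ K', Relation.ReflTransGen A x v) →
        K.card ≤ K'.card := by
      intro K' h
      rw [hKcard]
      exact Nat.find_le ⟨K', h, rfl⟩
    -- K is nonempty
    obtain ⟨v0, hv0⟩ := hns
    obtain ⟨x0, hx0, -⟩ := hKcov v0 hv0
    have hKne : 1 ≤ K.card := Finset.card_pos.mpr ⟨x0, hx0⟩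
    -- private vertices
    have hpriv : ∀ x ∈ K, ∃ pp qq : V, Relation.ReflTransGen A x qq ∧ A qq pp ∧
        ∀ y ∈ K, y ≠ x → ¬ Relation.ReflTransGen A y pp := by
      intro x hx
      by_contra hcon
      push_neg at hcon
      have hcon' : ∀ pp, (∃ u, A u pp) → Relation.ReflTransGen A x pp →
          ∃ y ∈ K, y ≠ x ∧ Relation.ReflTransGen A y pp := by
        intro pp hpp hxpp
        rcases Relation.ReflTransGen.cases_tail hxpp with heq | ⟨c, hxc, hcp⟩
        · obtain ⟨u, hu⟩ := hpp
          exact absurd hu (heq ▸ hKsrc x hx u)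
        · obtain ⟨y, hy, hyx, hyr⟩ := hcon pp c hxc hcp
          exact ⟨y, hy, hyx, hyr⟩
      have herase : (∀ z ∈ K.erase x, ∀ u, ¬ A u z) ∧
          ∀ v : V, (∃ u, A u v) → ∃ z ∈ K.erase x, Relation.ReflTransGen A z v := by
        constructor
        · intro z hz
          exact hKsrc z (Finset.mem_of_mem_erase hz)
        · intro v hv
          obtain ⟨z, hz, hzr⟩ := hKcov v hv
          by_cases hzx : z = x
          · subst hzx
            obtain ⟨y, hy, hyx, hyr⟩ := hcon' v hv hzr
            exact ⟨y, Finset.mem_erase.mpr ⟨hyx, hy⟩, hyr⟩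
          · exact ⟨z, Finset.mem_erase.mpr ⟨hzx, hz⟩, hzr⟩
      have h1 := hmin _ herase
      have h2 : (K.erase x).card = K.card - 1 := Finset.card_erase_of_mem hx
      omega
    choose! p q hq hqp hprivp using hpriv
    -- key disjointness lemma
    have hkey : ∀ x, x ∈ K → ∀ y, y ∈ K → x ≠ y → ∀ c d,
        (c = q x ∨ c = p x) → (d = q y ∨ d = p y) → ¬ A c d ∧ c ≠ d := by
      intro x hx y hy hxy c d hc hd
      have hxc : Relation.ReflTransGen A x c := by
        rcases hc with rfl | rfl
        · exact hq x hx
        · exact (hq x hx).tail (hqp x hx)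
      have hdp : Relation.ReflTransGen A d (p y) := by
        rcases hd with rfl | rfl
        · exact Relation.ReflTransGen.single (hqp y hy)
        · exact Relation.ReflTransGen.refl
      have hnot : ¬ Relation.ReflTransGen A x (p y) := hprivp y hy x hx hxy
      constructor
      · intro hA
        exact hnot (hxc.trans ((Relation.ReflTransGen.single hA).trans hdp))
      · rintro rfl
        exact hnot (hxc.trans hdp)
    -- the induced matching
    set M : Finset (Sym2 V) := K.image (fun x => s(q x, p x)) with hM
    have hinj : Set.InjOn (fun x => s(q x, p x)) K := by
      intro x hx y hy heq
      by_contra hne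
      have heq' : s(q x, p x) = s(q y, p y) := heq
      have hmem : p x ∈ s(q y, p y) := by
        rw [← heq']
        exact Sym2.mem_mk_right _ _
      rw [Sym2.mem_iff] at hmem
      rcases hmem with h | h
      · exact (hkey x hx y hy hne (p x) (q y) (Or.inr rfl) (Or.inl rfl)).2 h
      · exact (hkey x hx y hy hne (p x) (p y) (Or.inr rfl) (Or.inr rfl)).2 h
    have hMcard : M.card = K.card := Finset.card_image_of_injOn hinj
    have hIM : IsInducedMatching H M := by
      refine ⟨?_, ?_, ?_⟩
      · intro e he
        obtain ⟨x, hx, rfl⟩ := Finset.mem_image.mp he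
        exact (H.mem_edgeSet).mpr (horient _ _ (hqp x hx))
      · intro e he f hf hef a hae haf
        obtain ⟨x, hx, rfl⟩ := Finset.mem_image.mp he
        obtain ⟨y, hy, rfl⟩ := Finset.mem_image.mp hf
        have hxy : x ≠ y := by rintro rfl; exact hef rfl
        rw [Sym2.mem_iff] at hae haf
        exact (hkey x hx y hy hxy a a hae haf).2 rfl
      · intro a b hab ⟨e, he, hae⟩ ⟨f, hf, hbf⟩
        obtain ⟨x, hx, rfl⟩ := Finset.mem_image.mp he
        obtain ⟨y, hy, rfl⟩ := Finset.mem_image.mp hf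
        rw [Sym2.mem_iff] at hae hbf
        by_cases hxy : x = y
        · subst hxy
          have hne : a ≠ b := hab.ne
          rcases hae with rfl | rfl <;> rcases hbf with rfl | rfl
          · exact absurd rfl hne
          · exact Finset.mem_image.mpr ⟨x, hx, rfl⟩
          · rw [Sym2.eq_swap]
            exact Finset.mem_image.mpr ⟨x, hx, rfl⟩
          · exact absurd rfl hne
        · rcases (hcover a b).mp hab with hA | hA
          · exact absurd hA (hkey x hx y hy hxy a b hae hbf).1
          · exact absurd hA (hkey y hy x hx (Ne.symm hxy) b a hbf hae).1
    -- card bound via imn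
    have hbdd : BddAbove {m | ∃ M' : Finset (Sym2 V), IsInducedMatching H M' ∧ M'.card = m} := by
      refine ⟨Fintype.card (Sym2 V), ?_⟩
      rintro m ⟨M', -, rfl⟩
      exact le_trans M'.card_le_univ (le_of_eq Finset.card_univ)
    have himn : K.card ≤ imn H := by
      rw [← hMcard]
      exact le_csSup hbdd ⟨M, hIM, rfl⟩
    exact ⟨K, hKsrc, hKne, le_trans himn (le_max_right 1 _), hKcov⟩
  · -- no non-source at all: every vertex is a source
    push_neg at hns
    refine ⟨{Classical.arbitrary V}, ?_, ?_, ?_, ?_⟩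
    · intro x _ u
      exact hns x u
    · simp
    · simp
    · intro v ⟨u, hu⟩
      exact absurd hu (hns v u)
end

section
/- If H' is a quotient of a graph H (obtained by identifying vertices according to a partition of V(H), without self-loops), then the induced matching number of H' is at most the induced matching number of H. -/
lemma sym2_eq_of_mem {V : Type} {u v a b : V} (hu : u ∈ s(a, b)) (hv : v ∈ s(a, b))
    (hne : u ≠ v) : s(u, v) = s(a, b) := by
  rw [Sym2.mem_iff] at hu hv
  rcases hu with rfl | rfl <;> rcases hv with rfl | rfl
  · exact absurd rfl hne
  · rfl
  · exact Sym2.eq_swap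
  · exact absurd rfl hne

/-- If `H'` is a self-loop-free quotient of `H` (obtained by identifying vertices along a
surjection `q`, where no edge of `H` has both endpoints identified, and adjacency of `H'`
is exactly adjacency of blocks), then `imn H' ≤ imn H`. -/
theorem stmt2 {V W : Type} [Fintype V] [DecidableEq V] [Fintype W] [DecidableEq W]
    (H : SimpleGraph V) (H' : SimpleGraph W) (q : V → W)
    (hq : Function.Surjective q)
    (hnoloop : ∀ u v : V, H.Adj u v → q u ≠ q v)
    (hadj : ∀ x y : W, H'.Adj x y ↔ ∃ u v : V, q u = x ∧ q v = y ∧ H.Adj u v) :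
    imn H' ≤ imn H := by
  classical
  have hbdd : BddAbove {m | ∃ M : Finset (Sym2 V), IsInducedMatching H M ∧ M.card = m} := by
    refine ⟨Fintype.card (Sym2 V), ?_⟩
    rintro m ⟨M, _, rfl⟩
    exact Finset.card_le_univ M
  have hne0 : (0 : ℕ) ∈ {m | ∃ M : Finset (Sym2 W), IsInducedMatching H' M ∧ M.card = m} := by
    refine ⟨∅, ⟨?_, ?_, ?_⟩, rfl⟩
    · simp
    · simp
    · rintro u v _ ⟨e, he, _⟩
      simp at he
  refine csSup_le ⟨0, hne0⟩ ?_
  rintro m ⟨M', hM', rfl⟩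
  -- For each edge of M', there is a lifted edge in H.
  have hP : ∀ e ∈ M', ∃ p : V × V, H.Adj p.1 p.2 ∧ s(q p.1, q p.2) = e := by
    intro e he
    have := hM'.1 e he
    induction e using Sym2.inductionOn with
    | hf x y =>
      rw [SimpleGraph.mem_edgeSet, hadj] at this
      obtain ⟨u, v, hu, hv, huv⟩ := this
      exact ⟨(u, v), huv, by rw [hu, hv]⟩
  let L : ∀ e : Sym2 W, e ∈ M' → Sym2 V := fun e he =>
    s(((hP e he).choose).1, ((hP e he).choose).2)
  have hLadj : ∀ e he, (L e he) ∈ H.edgeSet := fun e he => (hP e he).choose_spec.1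
  have hLmem : ∀ e he, ∀ v : V, v ∈ L e he → q v ∈ e := by
    intro e he v hv
    obtain ⟨hadj', heq⟩ := (hP e he).choose_spec
    rw [Sym2.mem_iff] at hv
    rcases hv with rfl | rfl
    · have := Sym2.mem_mk_left (q (hP e he).choose.1) (q (hP e he).choose.2)
      rwa [heq] at this
    · have := Sym2.mem_mk_right (q (hP e he).choose.1) (q (hP e he).choose.2)
      rwa [heq] at this
  set M : Finset (Sym2 V) := M'.attach.image (fun x => L x.1 x.2) with hM
  have hmemM : ∀ E ∈ M, ∃ e : Sym2 W, ∃ he : e ∈ M', E = L e he := by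
    intro E hE
    rw [hM, Finset.mem_image] at hE
    obtain ⟨⟨e, he⟩, _, rfl⟩ := hE
    exact ⟨e, he, rfl⟩
  -- key: distinct e f give vertex-disjoint lifts
  have hdisj : ∀ (e : Sym2 W) (he : e ∈ M') (f : Sym2 W) (hf : f ∈ M') (v : V),
      v ∈ L e he → v ∈ L f hf → e = f := by
    intro e he f hf v hv1 hv2
    by_contra hne
    exact hM'.2.1 e he f hf hne (q v) (hLmem e he v hv1) (hLmem f hf v hv2)
  have hIM : IsInducedMatching H M := by
    refine ⟨?_, ?_, ?_⟩
    · intro E hE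
      obtain ⟨e, he, rfl⟩ := hmemM E hE
      exact hLadj e he
    · intro E hE F hF hEF v hvE hvF
      obtain ⟨e, he, rfl⟩ := hmemM E hE
      obtain ⟨f, hf, rfl⟩ := hmemM F hF
      have := hdisj e he f hf v hvE hvF
      subst this
      exact hEF rfl
    · rintro u v huv ⟨E, hE, huE⟩ ⟨F, hF, hvF⟩
      obtain ⟨e, he, rfl⟩ := hmemM E hE
      obtain ⟨f, hf, rfl⟩ := hmemM F hF
      have hqu : q u ∈ e := hLmem e he u huE
      have hqv : q v ∈ f := hLmem f hf v hvF
      have hadj' : H'.Adj (q u) (q v) := (hadj _ _).mpr ⟨u, v, rfl, rfl, huv⟩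
      have hmem : s(q u, q v) ∈ M' :=
        hM'.2.2 (q u) (q v) hadj' ⟨e, he, hqu⟩ ⟨f, hf, hqv⟩
      have he' : e = s(q u, q v) := by
        by_contra hne
        exact hM'.2.1 e he _ hmem hne (q u) hqu (Sym2.mem_mk_left _ _)
      have hf' : f = s(q u, q v) := by
        by_contra hne
        exact hM'.2.1 f hf _ hmem hne (q v) hqv (Sym2.mem_mk_right _ _)
      have hef : e = f := he'.trans hf'.symm
      subst hef
      have : L e he = L e hf := rfl
      rw [← this] at hvF
      obtain ⟨ha, heq⟩ := (hP e he).choose_spec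
      have : s(u, v) = L e he := sym2_eq_of_mem huE hvF huv.ne
      rw [this]
      rw [hM, Finset.mem_image]
      exact ⟨⟨e, he⟩, Finset.mem_attach _ _, rfl⟩
  have hcard : M.card = M'.card := by
    rw [hM]
    rw [Finset.card_image_of_injective _ ?_, Finset.card_attach]
    rintro ⟨e, he⟩ ⟨f, hf⟩ h
    have hv : ((hP e he).choose).1 ∈ L e he := Sym2.mem_mk_left _ _
    have h' : L e he = L f hf := h
    have hv2 : ((hP e he).choose).1 ∈ L f hf := h' ▸ hv
    exact Subtype.ext (hdisj e he f hf _ hv hv2)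
  rw [← hcard]
  exact le_csSup hbdd ⟨M, hIM, rfl⟩
end

section
/- Let G be a graph of degeneracy d whose vertices are coloured with k colours (not necessarily properly), such that every colour class has more than d·(k−1) vertices. Then G contains a colourful independent set of size k, i.e., an independent set containing exactly one vertex of each colour. -/
/-!
Greedy argument: take a vertex `v` of degree at most `d` in the subgraph induced by the
vertices carrying a still unused colour, put it into the independent set, and discard its
colour together with all neighbours of `v`. Each remaining colour class loses at most `d`
vertices while one colour disappears, so the bound `d * (#colours - 1) < #class` persists.
-/

open Finset

namespace SimpleGraph

variable {V ι : Type*} {G : SimpleGraph V}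

theorem IsIndepSet.insert_of_forall_not_adj {s : Set V} {v : V} (hs : G.IsIndepSet s)
    (hv : ∀ w ∈ s, ¬G.Adj v w) : G.IsIndepSet (insert v s) := by
  rw [← isClique_compl] at hs ⊢
  exact isClique_insert.mpr ⟨hs, fun w hw hvw => (compl_adj G v w).mpr ⟨hvw, hv w hw⟩⟩

variable [DecidableRel G.Adj]

variable (G) in
theorem card_colorClass_le_card_colorClass_nonadj_add [DecidableEq ι] (c : V → ι)
    (U : Finset V) (I : Finset ι) (v : V) {i : ι} (hi : i ∈ I) :
    #{w ∈ U | c w = i} ≤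
      #{w ∈ {w ∈ U | ¬G.Adj v w} | c w = i} + #(filter (G.Adj v) {w ∈ U | c w ∈ I}) := by
  rw [← card_filter_add_card_filter_not (s := {w ∈ U | c w = i}) (G.Adj v), add_comm]
  simp only [filter_filter, and_comm]
  gcongr with w _
  rintro rfl
  exact hi

theorem exists_isIndepSet_bijOn_of_degenerate [DecidableEq ι] {d : ℕ}
    (hdeg : ∀ S : Finset V, S.Nonempty → ∃ v ∈ S, #(S.filter (G.Adj v)) ≤ d) (c : V → ι)
    (I : Finset ι) (U : Finset V) (hclass : ∀ i ∈ I, d * (#I - 1) < #{w ∈ U | c w = i}) :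
    ∃ S : Finset V, S ⊆ U ∧ G.IsIndepSet S ∧ Set.BijOn c S I := by
  classical
  induction I using Finset.strongInduction generalizing U with
  | H I ih =>
  obtain rfl | ⟨i₁, hi₁⟩ := I.eq_empty_or_nonempty
  · exact ⟨∅, empty_subset U, by simp, by simp⟩
  have hU₀ : ({w ∈ U | c w ∈ I} : Finset V).Nonempty := by
    obtain ⟨w, hw⟩ := card_pos.mp (Nat.zero_lt_of_lt (hclass i₁ hi₁))
    rw [mem_filter] at hw
    exact ⟨w, mem_filter.mpr ⟨hw.1, hw.2 ▸ hi₁⟩⟩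
  obtain ⟨v, hv, hvdeg⟩ := hdeg _ hU₀
  rw [mem_filter] at hv
  have hI : #I - 1 = #(I.erase (c v)) := (card_erase_of_mem hv.2).symm
  obtain ⟨S, hSU, hSindep, hSbij⟩ :=
      ih (I.erase (c v)) (erase_ssubset hv.2) {w ∈ U | ¬G.Adj v w} fun i hi => by
    have hlt := hI ▸ hclass i (mem_of_mem_erase hi)
    have hle := G.card_colorClass_le_card_colorClass_nonadj_add c U I v (mem_of_mem_erase hi)
    have hsplit : d * #(I.erase (c v)) = d * (#(I.erase (c v)) - 1) + d := by
      rw [← Nat.mul_add_one, Nat.sub_add_cancel (card_pos.mpr ⟨i, hi⟩)]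
    omega
  refine ⟨insert v S, insert_subset hv.1 (hSU.trans (filter_subset _ U)), ?_, ?_⟩
  · rw [coe_insert]
    exact hSindep.insert_of_forall_not_adj fun w hw => (mem_filter.mp (hSU hw)).2
  · rw [coe_insert, ← insert_erase hv.2, coe_insert]
    exact hSbij.insert (I.notMem_erase (c v))

end SimpleGraph

theorem stmt6_general {V : Type} [Fintype V]
    (G : SimpleGraph V) [DecidableRel G.Adj] (d k : ℕ)
    (hdeg : ∀ S : Finset V, S.Nonempty → ∃ v ∈ S, (S.filter (G.Adj v)).card ≤ d)
    (c : V → Fin k)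
    (hclass : ∀ i : Fin k, d * (k - 1) < (Finset.univ.filter (fun v => c v = i)).card) :
    ∃ g : Fin k → V, (∀ i, c (g i) = i) ∧ ∀ i j, i ≠ j → ¬ G.Adj (g i) (g j) := by
  obtain ⟨S, -, hindep, hbij⟩ := SimpleGraph.exists_isIndepSet_bijOn_of_degenerate hdeg c
    univ univ (by simpa using hclass)
  let g : Fin k → V := fun i => (hbij.equiv c).symm ⟨i, mem_univ i⟩
  have hcg (i : Fin k) : c (g i) = i :=
    congrArg Subtype.val ((hbij.equiv c).apply_symm_apply _)
  exact ⟨g, hcg, fun i j hij => hindep (Subtype.prop _) (Subtype.prop _)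
    fun h => hij ((hcg i).symm.trans ((congrArg c h).trans (hcg j)))⟩

/-- Let `G` have degeneracy at most `d` and be coloured with `k` colours (surjectively but
not necessarily properly), with every colour class of size greater than `d·(k−1)`. Then `G`
has a colourful independent set of size `k`: one vertex of each colour, pairwise nonadjacent. -/
theorem stmt6 {V : Type} [Fintype V] [DecidableEq V]
    (G : SimpleGraph V) [DecidableRel G.Adj] (d k : ℕ)
    (hdeg : ∀ S : Finset V, S.Nonempty → ∃ v ∈ S, (S.filter (G.Adj v)).card ≤ d)
    (c : V → Fin k) (hcsurj : Function.Surjective c)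
    (hclass : ∀ i : Fin k, d * (k - 1) < (Finset.univ.filter (fun v => c v = i)).card) :
    ∃ g : Fin k → V, (∀ i, c (g i) = i) ∧ ∀ i j, i ≠ j → ¬ G.Adj (g i) (g j) :=
  stmt6_general G d k hdeg c hclass
end

section
/- Let G be a graph that is H-coloured via a homomorphism c : G → H. Then the number of colourful homomorphisms from H to G equals the alternating sum over subsets S ⊆ V(H) of (−1)^{|S|} times the number of homomorphisms from H to G − S, where G − S is obtained from G by deleting all vertices whose colour lies in S. -/
/-- Inclusion–exclusion for colourful homomorphisms: if `G` is `H`-coloured via the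
homomorphism `c`, then the number of colourful homomorphisms from `H` to `G` equals
`∑_{S ⊆ V(H)} (−1)^{|S|} · |Hom(H, G − S)|`, where `Hom(H, G − S)` is identified with the
homomorphisms from `H` to `G` avoiding all vertices with colour in `S`. -/
theorem stmt9 {V W : Type} [Fintype V] [Fintype W] [DecidableEq V] [DecidableEq W]
    (H : SimpleGraph V) (G : SimpleGraph W) (c : G →g H)
    (hc : Function.Surjective c) :
    (Nat.card {φ : H →g G // Function.Surjective (fun v => c (φ v))} : ℤ) =
      ∑ S : Finset V, (-1 : ℤ) ^ S.card *
        (Nat.card {φ : H →g G // ∀ v : V, c (φ v) ∉ S} : ℤ) := by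
  classical
  haveI : Fintype (H →g G) :=
    Fintype.ofInjective (fun φ => (φ : V → W)) DFunLike.coe_injective
  have card_eq : ∀ (p : (H →g G) → Prop) [DecidablePred p],
      (Nat.card {φ : H →g G // p φ} : ℤ) = ∑ φ : H →g G, if p φ then (1 : ℤ) else 0 := by
    intro p _
    rw [Nat.card_eq_fintype_card, Fintype.card_subtype]
    push_cast [Finset.card_filter]
    rfl
  rw [card_eq]
  have rhs_eq : ∀ S : Finset V, (-1 : ℤ) ^ S.card * (Nat.card {φ : H →g G // ∀ v : V, c (φ v) ∉ S} : ℤ) = ∑ φ : H →g G, (-1 : ℤ) ^ S.card * (if ∀ v : V, c (φ v) ∉ S then 1 else 0) := fun S => by rw [card_eq, Finset.mul_sum]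
  simp_rw [rhs_eq]
  rw [Finset.sum_comm]
  refine Finset.sum_congr rfl fun φ _ => ?_
  set T : Finset V := (Finset.univ.image fun v => c (φ v))ᶜ with hT
  have hcond : ∀ S : Finset V, (∀ v : V, c (φ v) ∉ S) ↔ S ⊆ T := by
    intro S
    constructor
    · intro h s hs
      simp only [hT, Finset.mem_compl, Finset.mem_image, Finset.mem_univ, true_and]
      rintro ⟨v, rfl⟩
      exact h v hs
    · intro h v hv
      have := h hv
      simp only [hT, Finset.mem_compl, Finset.mem_image, Finset.mem_univ, true_and] at this
      exact this ⟨v, rfl⟩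
  have hsurj : (Function.Surjective fun v => c (φ v)) ↔ T = ∅ := by
    simp only [hT, Finset.compl_eq_empty_iff, Finset.eq_univ_iff_forall, Finset.mem_image,
      Finset.mem_univ, true_and]
    exact ⟨fun h x => h x, fun h x => h x⟩
  calc (if Function.Surjective fun v => c (φ v) then (1 : ℤ) else 0)
      = if T = ∅ then 1 else 0 := by simp [hsurj]
    _ = ∑ S ∈ T.powerset, (-1 : ℤ) ^ S.card := (Finset.sum_powerset_neg_one_pow_card).symm
    _ = ∑ S : Finset V, if S ⊆ T then (-1 : ℤ) ^ S.card else 0 := by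
        rw [← Finset.sum_filter]
        congr 1
        ext S
        simp [Finset.mem_powerset]
    _ = ∑ S : Finset V, (-1 : ℤ) ^ S.card * (if ∀ v : V, c (φ v) ∉ S then 1 else 0) := by
        refine Finset.sum_congr rfl fun S _ => ?_
        by_cases h : S ⊆ T <;> simp [h, (hcond S).not.mpr, hcond S, h]
end

section
/- Let G be H-coloured via c ∈ Hom(G, H). Then the number of colourful homomorphisms from H to G equals |Aut(H)| times the number of colour-prescribed homomorphisms from H to G. -/
/-- A bijective graph homomorphism from a finite graph to itself is an isomorphism. -/
noncomputable def bijHomIso {V : Type} [Finite V] (H : SimpleGraph V)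
    (f : H →g H) (hf : Function.Bijective f) : H ≃g H :=
  { toEquiv := Equiv.ofBijective f hf
    map_rel_iff' := by
      intro a b
      set e : Equiv.Perm V := Equiv.ofBijective f hf with he
      have hpow : ∀ (k : ℕ) (a b : V), H.Adj a b → H.Adj ((e ^ k) a) ((e ^ k) b) := by
        intro k
        induction k with
        | zero => intro a b hab; simpa using hab
        | succ n ih =>
          intro a b hab
          have h1 : H.Adj (e a) (e b) := f.map_adj hab
          have := ih _ _ h1
          simpa [pow_succ, Equiv.Perm.mul_apply] using this
      have hn : 0 < orderOf e := orderOf_pos e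
      have key : ∀ x : V, (e ^ (orderOf e - 1)) (e x) = x := by
        intro x
        have h1 : (e ^ (orderOf e - 1)) * e = 1 := by
          rw [← pow_succ, Nat.sub_add_cancel hn, pow_orderOf_eq_one]
        rw [← Equiv.Perm.mul_apply, h1]; rfl
      constructor
      · intro h
        have := hpow (orderOf e - 1) _ _ h
        simpa [key] using this
      · exact fun h => f.map_adj h }

/-- If `G` is `H`-coloured via the surjective homomorphism `c`, then the number of colourful
homomorphisms from `H` to `G` equals `|Aut(H)|` times the number of colour-prescribed
homomorphisms from `H` to `G`. -/
theorem stmt10 {V W : Type} [Fintype V] [Fintype W] [DecidableEq V] [DecidableEq W]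
    (H : SimpleGraph V) (G : SimpleGraph W) (c : G →g H)
    (hc : Function.Surjective c) :
    Nat.card {φ : H →g G // Function.Surjective (fun v => c (φ v))} =
      Nat.card (H ≃g H) * Nat.card {φ : H →g G // ∀ v : V, c (φ v) = v} := by
  classical
  have hbij : ∀ (φ : H →g G), Function.Surjective (fun v => c (φ v)) →
      Function.Bijective (c.comp φ) := fun φ h =>
    Finite.surjective_iff_bijective.mp h
  -- Forward map
  let F : {φ : H →g G // Function.Surjective (fun v => c (φ v))} →
      (H ≃g H) × {φ : H →g G // ∀ v : V, c (φ v) = v} := fun p =>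
    let α := bijHomIso H (c.comp p.1) (hbij p.1 p.2)
    ⟨α, ⟨p.1.comp α.symm.toHom, fun v => α.apply_symm_apply v⟩⟩
  let Finv : (H ≃g H) × {φ : H →g G // ∀ v : V, c (φ v) = v} →
      {φ : H →g G // Function.Surjective (fun v => c (φ v))} := fun p =>
    ⟨p.2.1.comp p.1.toHom, by
      have heq : (fun v => c ((p.2.1.comp p.1.toHom) v)) = ⇑p.1 := by
        funext v
        exact p.2.2 (p.1 v)
      rw [heq]
      exact p.1.toEquiv.surjective⟩
  have hleft : Function.LeftInverse Finv F := by
    intro p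
    apply Subtype.ext
    apply DFunLike.ext
    intro v
    show p.1 ((bijHomIso H (c.comp p.1) (hbij p.1 p.2)).symm
      ((bijHomIso H (c.comp p.1) (hbij p.1 p.2)) v)) = p.1 v
    rw [RelIso.symm_apply_apply]
  have hright : Function.RightInverse Finv F := by
    intro p
    obtain ⟨α, ψ, hψ⟩ := p
    have hα : bijHomIso H (c.comp (ψ.comp α.toHom)) (hbij _ (Finv ⟨α, ψ, hψ⟩).2) = α := by
      apply RelIso.ext
      intro v
      show c (ψ (α v)) = α v
      exact hψ (α v)
    show (⟨_, _, _⟩ : (H ≃g H) × {φ : H →g G // ∀ v : V, c (φ v) = v}) = ⟨α, ψ, hψ⟩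
    refine Prod.ext ?_ ?_
    · exact hα
    · apply Subtype.ext
      apply DFunLike.ext
      intro v
      show ψ (α ((bijHomIso H (c.comp (ψ.comp α.toHom)) (hbij _ (Finv ⟨α, ψ, hψ⟩).2)).symm v)) = ψ v
      congr 1
      have : (bijHomIso H (c.comp (ψ.comp α.toHom)) (hbij _ (Finv ⟨α, ψ, hψ⟩).2)).symm v = α.symm v := by
        rw [hα]
      rw [this, RelIso.apply_symm_apply]
  have hEquiv : {φ : H →g G // Function.Surjective (fun v => c (φ v))} ≃
      (H ≃g H) × {φ : H →g G // ∀ v : V, c (φ v) = v} :=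
    ⟨F, Finv, hleft, hright⟩
  rw [Nat.card_congr hEquiv, Nat.card_prod]
end

section
/- Let T be a dag tree decomposition of a directed acyclic graph H⃗ in which every bag is a subset of the sources of H⃗. Then T is a dag tree decomposition of H⃗ if and only if T is a dag tree decomposition of the skeleton Λ(H⃗). -/
/-- `v` is a source of the DAG given by arc relation `A`. -/
def IsSource {V : Type} (A : V → V → Prop) (v : V) : Prop := ∀ u, ¬ A u v

/-- `v` is a joint: reachable from two distinct sources. -/
def IsJoint {V : Type} (A : V → V → Prop) (v : V) : Prop :=
  ∃ s1 s2 : V, IsSource A s1 ∧ IsSource A s2 ∧ s1 ≠ s2 ∧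
    Relation.ReflTransGen A s1 v ∧ Relation.ReflTransGen A s2 v

/-- The skeleton of a DAG: the bipartite DAG on sources and joints, with an arc from a
source `s` to a joint `v` iff `v` is reachable from `s`. -/
def skeleton {V : Type} (A : V → V → Prop) :
    {v : V // IsSource A v ∨ IsJoint A v} → {v : V // IsSource A v ∨ IsJoint A v} → Prop :=
  fun x y => IsSource A x.val ∧ IsJoint A y.val ∧ Relation.ReflTransGen A x.val y.val

/-- A dag tree decomposition of a DAG `D`, where all bags consist of sources of `D`:
a tree whose bags are sets of sources, every source lies in some bag, the reachability
closures of the bags cover all vertices, and for a bag on the tree path between two bags,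
every vertex reachable from both of the latter is reachable from the former. -/
def IsDTD {X ι : Type} (D : X → X → Prop) (T : SimpleGraph ι) (bag : ι → Set X) : Prop :=
  T.IsTree ∧
  (∀ i, ∀ x ∈ bag i, IsSource D x) ∧
  (∀ x : X, IsSource D x → ∃ i, x ∈ bag i) ∧
  (∀ x : X, ∃ i, ∃ b ∈ bag i, Relation.ReflTransGen D b x) ∧
  (∀ i i1 i2 : ι, ∀ p : T.Walk i1 i2, p.IsPath → i ∈ p.support →
      ∀ x : X, (∃ b ∈ bag i1, Relation.ReflTransGen D b x) →
           (∃ b ∈ bag i2, Relation.ReflTransGen D b x) →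
           ∃ b ∈ bag i, Relation.ReflTransGen D b x)

lemma reach_source_eq {V : Type} {A : V → V → Prop} {s v : V}
    (h : Relation.ReflTransGen A s v) (hv : IsSource A v) : s = v := by
  rcases h.cases_tail with rfl | ⟨c, _, hc⟩
  · rfl
  · exact absurd hc (hv c)

lemma source_not_joint {V : Type} {A : V → V → Prop} {v : V}
    (hv : IsSource A v) : ¬ IsJoint A v := by
  rintro ⟨s1, s2, _, _, hne, h1, h2⟩
  exact hne ((reach_source_eq h1 hv).trans (reach_source_eq h2 hv).symm)

lemma skel_source_iff {V : Type} {A : V → V → Prop}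
    (x : {v : V // IsSource A v ∨ IsJoint A v}) :
    IsSource (skeleton A) x ↔ IsSource A x.val := by
  constructor
  · intro h
    rcases x.property with hs | hj
    · exact hs
    · obtain ⟨s1, s2, hs1, _, _, hr1, _⟩ := id hj
      exact absurd ⟨hs1, hj, hr1⟩ (h ⟨s1, Or.inl hs1⟩)
  · intro hs u hu
    exact source_not_joint hs hu.2.1

lemma skel_reach {V : Type} {A : V → V → Prop}
    {b x : {v : V // IsSource A v ∨ IsJoint A v}}
    (h : Relation.ReflTransGen (skeleton A) b x) : b = x ∨ skeleton A b x := by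
  rcases h.cases_tail with rfl | ⟨c, hbc, hcx⟩
  · exact Or.inl rfl
  · have : b = c := reach_source_eq hbc ((skel_source_iff c).mpr hcx.1)
    exact Or.inr (this ▸ hcx)

lemma skel_reach_val {V : Type} {A : V → V → Prop}
    {b x : {v : V // IsSource A v ∨ IsJoint A v}}
    (h : Relation.ReflTransGen (skeleton A) b x) :
    Relation.ReflTransGen A b.val x.val := by
  rcases skel_reach h with rfl | harc
  · exact Relation.ReflTransGen.refl
  · exact harc.2.2

lemma exists_source_reach {V : Type} [Fintype V] {A : V → V → Prop}
    (hacyc : ∀ v : V, ¬ Relation.TransGen A v v) (v : V) :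
    ∃ s, IsSource A s ∧ Relation.ReflTransGen A s v := by
  haveI : IsIrrefl V (Relation.TransGen A) := ⟨hacyc⟩
  haveI : IsTrans V (Relation.TransGen A) := ⟨fun _ _ _ => Relation.TransGen.trans⟩
  have hwf : WellFounded (Relation.TransGen A) :=
    Finite.wellFounded_of_trans_of_irrefl _
  have hA : WellFounded A :=
    Subrelation.wf (fun h => Relation.TransGen.single h) hwf
  induction v using hA.induction with
  | _ v ih =>
    by_cases hv : IsSource A v
    · exact ⟨v, hv, Relation.ReflTransGen.refl⟩
    · simp only [IsSource, not_forall, not_not] at hv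
      obtain ⟨u, hu⟩ := hv
      obtain ⟨s, hs, hr⟩ := ih u hu
      exact ⟨s, hs, hr.tail hu⟩

/-- A tree `T` with bags of sources of a finite DAG `A` is a dag tree decomposition of the
DAG if and only if it is a dag tree decomposition of its skeleton. -/
theorem stmt16 {V ι : Type} [Fintype V]
    (A : V → V → Prop) (hacyc : ∀ v : V, ¬ Relation.TransGen A v v)
    (T : SimpleGraph ι) (bag : ι → Set V)
    (hbagS : ∀ i, ∀ x ∈ bag i, IsSource A x) :
    IsDTD A T bag ↔
      IsDTD (skeleton A) T
        (fun i => {x : {v : V // IsSource A v ∨ IsJoint A v} | x.val ∈ bag i}) := by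
  constructor
  · rintro ⟨htree, _, hcov, hreach, hpath⟩
    refine ⟨htree, ?_, ?_, ?_, ?_⟩
    · intro i x hx
      exact (skel_source_iff x).mpr (hbagS i x.val hx)
    · intro x hx
      exact hcov x.val ((skel_source_iff x).mp hx)
    · intro x
      rcases x.property with hs | hj
      · obtain ⟨i, hi⟩ := hcov x.val hs
        exact ⟨i, x, hi, Relation.ReflTransGen.refl⟩
      · obtain ⟨i, b, hb, hr⟩ := hreach x.val
        have hbs : IsSource A b := hbagS i b hb
        exact ⟨i, ⟨b, Or.inl hbs⟩, hb,
          Relation.ReflTransGen.single ⟨hbs, hj, hr⟩⟩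
    · rintro i i1 i2 p hp hi x ⟨b1, hb1, hr1⟩ ⟨b2, hb2, hr2⟩
      obtain ⟨b, hb, hr⟩ := hpath i i1 i2 p hp hi x.val
        ⟨b1.val, hb1, skel_reach_val hr1⟩ ⟨b2.val, hb2, skel_reach_val hr2⟩
      have hbs : IsSource A b := hbagS i b hb
      by_cases heq : b = x.val
      · exact ⟨x, show x.val ∈ bag i from heq ▸ hb, Relation.ReflTransGen.refl⟩
      · have hj : IsJoint A x.val := by
          rcases x.property with hs | hj
          · exact absurd (reach_source_eq hr hs) heq
          · exact hj
        exact ⟨⟨b, Or.inl hbs⟩, hb, Relation.ReflTransGen.single ⟨hbs, hj, hr⟩⟩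
  · rintro ⟨htree, _, hcov, hreach, hpath⟩
    refine ⟨htree, hbagS, ?_, ?_, ?_⟩
    · intro v hv
      exact hcov ⟨v, Or.inl hv⟩ ((skel_source_iff _).mpr hv)
    · intro v
      obtain ⟨s, hs, hsv⟩ := exists_source_reach hacyc v
      obtain ⟨i, b, hb, hr⟩ := hreach ⟨s, Or.inl hs⟩
      have : b.val = s := reach_source_eq (skel_reach_val hr) hs
      exact ⟨i, s, this ▸ hb, hsv⟩
    · rintro i i1 i2 p hp hi v ⟨b1, hb1, hr1⟩ ⟨b2, hb2, hr2⟩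
      have hs1 : IsSource A b1 := hbagS i1 b1 hb1
      have hs2 : IsSource A b2 := hbagS i2 b2 hb2
      by_cases hne : b1 = b2
      · -- use the skeleton condition on the source b1 itself
        subst hne
        obtain ⟨b, hb, hr⟩ := hpath i i1 i2 p hp hi ⟨b1, Or.inl hs1⟩
          ⟨⟨b1, Or.inl hs1⟩, hb1, Relation.ReflTransGen.refl⟩
          ⟨⟨b1, Or.inl hs1⟩, hb2, Relation.ReflTransGen.refl⟩
        have : b.val = b1 := reach_source_eq (skel_reach_val hr) hs1
        exact ⟨b1, this ▸ hb, hr1⟩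
      · have hj : IsJoint A v := ⟨b1, b2, hs1, hs2, hne, hr1, hr2⟩
        obtain ⟨b, hb, hr⟩ := hpath i i1 i2 p hp hi ⟨v, Or.inr hj⟩
          ⟨⟨b1, Or.inl hs1⟩, hb1, Relation.ReflTransGen.single ⟨hs1, hj, hr1⟩⟩
          ⟨⟨b2, Or.inl hs2⟩, hb2, Relation.ReflTransGen.single ⟨hs2, hj, hr2⟩⟩
        exact ⟨b.val, hb, skel_reach_val hr⟩
end

section
/- Let G be a graph of degeneracy d on n vertices and k ≤ n/(d+1) a positive integer. Then the number of independent sets of size k in G is at least C(⌈n/(d+1)⌉, k), and hence the fraction of k-element vertex subsets of G that are independent sets is at least k^{-k}(d+1)^{-k}. -/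
open scoped Classical

/-!
Greedily picking a vertex of degree at most `d`, keeping it and discarding it together with its
neighbourhood removes at most `d + 1` vertices per chosen vertex, so `G` has an independent set
`I` with `n ≤ (d + 1) * |I|`, i.e. `|I| ≥ ⌈n / (d + 1)⌉ =: m`. All `k`-subsets of `I` are
independent, giving `C(m, k)` independent `k`-sets. For the ratio, combine
`C(n, k) ≤ n ^ k ≤ (d + 1) ^ k * m ^ k` with `m ^ k ≤ k ^ k * C(m, k)`, valid for `k ≤ m`.
-/

open Finset

namespace Nat

theorem pow_le_pow_mul_choose {m k : ℕ} (hkm : k ≤ m) : m ^ k ≤ k ^ k * m.choose k := by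
  -- termwise, `m * (k - i) ≤ k * (m - i)` in `k ! * m ^ k = ∏ m * (k - i)` and
  -- `k ^ k * m.descFactorial k = ∏ k * (m - i)`
  have key : m ^ k * k ! ≤ k ^ k * m.descFactorial k := by
    rw [← descFactorial_self, descFactorial_eq_prod_range, descFactorial_eq_prod_range,
      pow_eq_prod_const, pow_eq_prod_const, ← prod_mul_distrib, ← prod_mul_distrib]
    refine prod_le_prod' fun i _ => ?_
    rw [Nat.mul_sub, Nat.mul_sub, Nat.mul_comm k m]
    exact Nat.sub_le_sub_left (Nat.mul_le_mul_right i hkm) _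
  rw [descFactorial_eq_factorial_mul_choose, Nat.mul_left_comm, Nat.mul_comm (m ^ k)] at key
  exact Nat.le_of_mul_le_mul_left key k.factorial_pos

theorem choose_le_pow_mul_pow_mul_choose {n m b k : ℕ} (hn : n ≤ b * m) (hkm : k ≤ m) :
    n.choose k ≤ k ^ k * b ^ k * m.choose k :=
  calc n.choose k ≤ n ^ k := choose_le_pow n k
    _ ≤ b ^ k * m ^ k := by rw [← Nat.mul_pow]; exact Nat.pow_le_pow_left hn k
    _ ≤ b ^ k * (k ^ k * m.choose k) := Nat.mul_le_mul_left _ (pow_le_pow_mul_choose hkm)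
    _ = k ^ k * b ^ k * m.choose k := by ring

end Nat

namespace SimpleGraph

variable {V : Type*} (G : SimpleGraph V)

theorem IsIndepSet.forall_not_adj {s : Set V} (hs : G.IsIndepSet s) :
    ∀ u ∈ s, ∀ v ∈ s, ¬ G.Adj u v :=
  fun _ hu _ hv huv => hs hu hv huv.ne huv

theorem exists_isIndepSet_subset_card_le_mul [DecidableEq V] [DecidableRel G.Adj] {d : ℕ}
    (hdeg : ∀ S : Finset V, S.Nonempty → ∃ v ∈ S, #{w ∈ S | G.Adj v w} ≤ d) (S : Finset V) :
    ∃ I ⊆ S, G.IsIndepSet (I : Set V) ∧ #S ≤ (d + 1) * #I := by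
  induction S using Finset.strongInduction with
  | H S ih =>
    rcases S.eq_empty_or_nonempty with rfl | hS
    · exact ⟨∅, subset_refl _, by simp, by simp⟩
    obtain ⟨v, hvS, hvd⟩ := hdeg S hS
    set T := {w ∈ S.erase v | ¬ G.Adj v w}
    have hTS : T ⊂ S :=
      (filter_subset _ _).trans_ssubset (erase_ssubset hvS)
    obtain ⟨I, hIT, hI, hTI⟩ := ih T hTS
    have hvT : v ∉ T := fun h => (mem_erase.1 (mem_filter.1 h).1).1 rfl
    have hST : #S ≤ #T + d + 1 := by
      have hadj : #{w ∈ S.erase v | G.Adj v w} ≤ d :=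
        (card_le_card (filter_subset_filter _ (erase_subset v S))).trans hvd
      have hsplit : #{w ∈ S.erase v | G.Adj v w} + #T = #S - 1 := by
        rw [card_filter_add_card_filter_not, card_erase_of_mem hvS]
      have := hS.card_pos
      omega
    refine ⟨insert v I, insert_subset hvS (hIT.trans hTS.subset), ?_, ?_⟩
    · rw [coe_insert]
      refine hI.insert fun w hw _ => ?_
      have hvw := (mem_filter.1 (hIT hw)).2
      exact ⟨hvw, fun hwv => hvw hwv.symm⟩
    · rw [card_insert_of_notMem fun h => hvT (hIT h), Nat.mul_succ]
      omega

theorem choose_card_le_ncard_indep [Finite V] {I : Finset V} (hI : G.IsIndepSet (I : Set V))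
    (k : ℕ) :
    (#I).choose k ≤ {s : Finset V | #s = k ∧ ∀ u ∈ s, ∀ v ∈ s, ¬ G.Adj u v}.ncard := by
  rw [← card_powersetCard, ← Set.ncard_coe_finset]
  refine Set.ncard_le_ncard (fun s hs => ?_) (Set.toFinite _)
  obtain ⟨hsI, rfl⟩ := mem_powersetCard.1 hs
  exact ⟨rfl, IsIndepSet.forall_not_adj G (hI.mono hsI)⟩

end SimpleGraph

theorem stmt18_general {V : Type} [Fintype V]
    (G : SimpleGraph V) (d k : ℕ)
    (hdeg : ∀ S : Finset V, S.Nonempty → ∃ v ∈ S, (S.filter (fun w => G.Adj v w)).card ≤ d)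
    (hkn : k * (d + 1) ≤ Fintype.card V) :
    Nat.choose ((Fintype.card V + d) / (d + 1)) k ≤
        {s : Finset V | s.card = k ∧ ∀ u ∈ s, ∀ v ∈ s, ¬ G.Adj u v}.ncard ∧
      (Nat.choose (Fintype.card V) k : ℚ) ≤
        (k : ℚ) ^ k * ((d : ℚ) + 1) ^ k *
          ({s : Finset V | s.card = k ∧ ∀ u ∈ s, ∀ v ∈ s, ¬ G.Adj u v}.ncard : ℚ) := by
  set n := Fintype.card V
  set m := (n + d) / (d + 1)
  obtain ⟨I, -, hI, hnI⟩ := G.exists_isIndepSet_subset_card_le_mul hdeg univ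
  rw [card_univ] at hnI
  have hmI : m ≤ #I := (Nat.div_le_iff_le_mul_add_pred (by omega)).2 (by omega)
  have hcount := (Nat.choose_le_choose k hmI).trans (G.choose_card_le_ncard_indep hI k)
  refine ⟨hcount, ?_⟩
  have hnm : n ≤ (d + 1) * m := by
    have : (d + 1) * m + (n + d) % (d + 1) = n + d := Nat.div_add_mod (n + d) (d + 1)
    have := Nat.mod_lt (n + d) (by omega : 0 < d + 1)
    omega
  have hkm : k ≤ m := (Nat.le_div_iff_mul_le (by omega)).2 (by omega)
  exact_mod_cast (Nat.choose_le_pow_mul_pow_mul_choose hnm hkm).trans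
    (Nat.mul_le_mul_left _ hcount)

/-- Let `G` have degeneracy at most `d` on `n` vertices and let `k` be a positive integer
with `k ≤ n/(d+1)`. Then the number of independent sets of size `k` in `G` is at least
`C(⌈n/(d+1)⌉, k)`, and the fraction of `k`-element vertex subsets that are independent is
at least `k^{-k}·(d+1)^{-k}`. -/
theorem stmt18 {V : Type} [Fintype V] [DecidableEq V]
    (G : SimpleGraph V) (d k : ℕ)
    (hdeg : ∀ S : Finset V, S.Nonempty → ∃ v ∈ S, (S.filter (fun w => G.Adj v w)).card ≤ d)
    (hk : 0 < k) (hkn : k * (d + 1) ≤ Fintype.card V) :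
    Nat.choose ((Fintype.card V + d) / (d + 1)) k ≤
        {s : Finset V | s.card = k ∧ ∀ u ∈ s, ∀ v ∈ s, ¬ G.Adj u v}.ncard ∧
      (Nat.choose (Fintype.card V) k : ℚ) ≤
        (k : ℚ) ^ k * ((d : ℚ) + 1) ^ k *
          ({s : Finset V | s.card = k ∧ ∀ u ∈ s, ∀ v ∈ s, ¬ G.Adj u v}.ncard : ℚ) :=
  stmt18_general G d k hdeg hkn
end
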